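/- arXiv:1508.02325 — 2 statements merged into one kernel-verified Lean document; each statement's English description precedes it below -/
import Mathlib

section
/- For s > 1 and τ ≥ 0, the integral ∫₀^τ 2·(1+t²)^(−s/2)·Γ(s)·sin(s·arctan t) dt equals (2Γ(s)/(s−1))·(1 − (τ²+1)^(−s/2)·(τ·sin(s·arctan τ) + cos(s·arctan τ))). -/
/-!
With `θ = arctan u` one has `(1 - i u)^(-s) = (1 + u²)^(-s/2) e^(i s θ)`, so the integrand is
`2 Γ(s) Im (1 - i u)^(-s)`, and a primitive is `2 Γ(s) Re (1 - i u)^(1-s) / (1 - s)`, where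
`Re (1 - i u)^(1-s) = (1 + u²)^(-s/2) (u sin(s θ) + cos(s θ))` equals `1` at `u = 0`.
-/

open Real

noncomputable def dephasingPrimitive (s u : ℝ) : ℝ :=
  (1 + u ^ 2) ^ (-(s / 2)) * (u * sin (s * arctan u) + cos (s * arctan u))

theorem dephasingPrimitive_zero (s : ℝ) : dephasingPrimitive s 0 = 1 := by
  simp [dephasingPrimitive]

theorem hasDerivAt_dephasingPrimitive (s t : ℝ) :
    HasDerivAt (dephasingPrimitive s)
      ((1 - s) * ((1 + t ^ 2) ^ (-(s / 2)) * sin (s * arctan t))) t := by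
  have hpos : 0 < 1 + t ^ 2 := by positivity
  have hangle : HasDerivAt (fun u => s * arctan u) (s * (1 / (1 + t ^ 2))) t :=
    (hasDerivAt_arctan t).const_mul s
  have hmod : HasDerivAt (fun u : ℝ => (1 + u ^ 2) ^ (-(s / 2)))
      (2 * t * (-(s / 2)) * (1 + t ^ 2) ^ (-(s / 2) - 1)) t := by
    have hbase : HasDerivAt (fun u : ℝ => 1 + u ^ 2) (2 * t) t := by
      simpa using (hasDerivAt_pow 2 t).const_add 1
    exact hbase.rpow_const (Or.inl hpos.ne')
  refine (hmod.mul (((hasDerivAt_id t).mul hangle.sin).add hangle.cos)).congr_deriv ?_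
  rw [rpow_sub_one hpos.ne', Pi.add_apply, Pi.mul_apply, id]
  field_simp
  ring

theorem integral_one_add_sq_rpow_mul_sin_arctan (s a b : ℝ) :
    (1 - s) * ∫ t in a..b, (1 + t ^ 2) ^ (-(s / 2)) * sin (s * arctan t) =
      dephasingPrimitive s b - dephasingPrimitive s a := by
  rw [← intervalIntegral.integral_const_mul]
  refine intervalIntegral.integral_eq_sub_of_hasDerivAt
    (fun t _ => hasDerivAt_dephasingPrimitive s t) (Continuous.intervalIntegrable ?_ a b)
  have hmod : Continuous fun t : ℝ => (1 + t ^ 2) ^ (-(s / 2)) :=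
    (continuous_const.add (continuous_pow 2)).rpow_const fun t =>
      Or.inl (by positivity : (0 : ℝ) < 1 + t ^ 2).ne'
  exact continuous_const.mul (hmod.mul (continuous_sin.comp (continuous_arctan.const_mul s)))

theorem dephasing_factor_integral_general (s τ : ℝ) (hs : 1 < s) :
    ∫ t in (0:ℝ)..τ, 2 * (1 + t^2) ^ (-(s/2)) * Real.Gamma s * Real.sin (s * Real.arctan t)
      = (2 * Real.Gamma s / (s - 1)) *
        (1 - (τ^2 + 1) ^ (-(s/2)) *
          (τ * Real.sin (s * Real.arctan τ) + Real.cos (s * Real.arctan τ))) := by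
  have hs' : s - 1 ≠ 0 := sub_ne_zero.mpr hs.ne'
  have hprimitive := integral_one_add_sq_rpow_mul_sin_arctan s 0 τ
  rw [dephasingPrimitive_zero, dephasingPrimitive, add_comm 1 (τ ^ 2)] at hprimitive
  have hfactor : ∀ t : ℝ, 2 * (1 + t ^ 2) ^ (-(s / 2)) * Gamma s * sin (s * arctan t) =
      2 * Gamma s * ((1 + t ^ 2) ^ (-(s / 2)) * sin (s * arctan t)) := fun t => by ring
  simp_rw [hfactor, intervalIntegral.integral_const_mul]
  rw [div_mul_eq_mul_div, eq_div_iff hs']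
  linear_combination (-2 * Gamma s) * hprimitive

theorem dephasing_factor_integral (s τ : ℝ) (hs : 1 < s) (hτ : 0 ≤ τ) :
    ∫ t in (0:ℝ)..τ, 2 * (1 + t^2) ^ (-(s/2)) * Real.Gamma s * Real.sin (s * Real.arctan t)
      = (2 * Real.Gamma s / (s - 1)) *
        (1 - (τ^2 + 1) ^ (-(s/2)) *
          (τ * Real.sin (s * Real.arctan τ) + Real.cos (s * Real.arctan τ))) :=
  dephasing_factor_integral_general s τ hs
end

section
/- The function Λ∞(s) = 2Γ(s)/(s−1) on (1, ∞) attains a minimum at some s̄ ∈ (2,3); in particular Λ∞ is strictly decreasing on (1, 2] and strictly increasing on [3, ∞). -/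
/-! The functional equation `Γ(s) = (s - 1) Γ(s - 1)` turns `2Γ(s)/(s - 1)` into `2Γ(s - 1)`, so
the claim is the shift by one of the known shape of `Γ` on `(0, ∞)`: strictly decreasing on
`(0, 1]`, strictly increasing on `[2, ∞)`, with its minimum attained in `(1, 2)`. -/

open Real Set

lemma Real.Gamma_div_sub_one {s : ℝ} (hs : s ≠ 1) : Gamma s / (s - 1) = Gamma (s - 1) := by
  have hs' : s - 1 ≠ 0 := sub_ne_zero.mpr hs
  rw [div_eq_iff hs', mul_comm, ← Gamma_add_one hs', sub_add_cancel]

lemma eqOn_two_mul_Gamma_div_sub_one :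
    EqOn (fun s : ℝ => 2 * Gamma s / (s - 1)) (fun s => 2 * Gamma (s - 1)) (Ioi 1) :=
  fun _ hs => by simp only [mul_div_assoc, Gamma_div_sub_one (ne_of_gt hs)]

theorem asymptotic_dephasing_min :
    (∃ sbar ∈ Set.Ioo (2:ℝ) 3,
      ∀ s ∈ Set.Ioi (1:ℝ),
        2 * Real.Gamma sbar / (sbar - 1) ≤ 2 * Real.Gamma s / (s - 1)) ∧
    StrictAntiOn (fun s : ℝ => 2 * Real.Gamma s / (s - 1)) (Set.Ioc (1:ℝ) 2) ∧
    StrictMonoOn (fun s : ℝ => 2 * Real.Gamma s / (s - 1)) (Set.Ici (3:ℝ)) := by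
  have hshift := eqOn_two_mul_Gamma_div_sub_one
  obtain ⟨x, ⟨hx1, hx2⟩, hmin⟩ := exists_isMinOn_Gamma_Ioi
  refine ⟨⟨x + 1, ⟨by linarith, by linarith⟩, fun s hs => ?_⟩, ?_, ?_⟩
  · calc 2 * Gamma (x + 1) / (x + 1 - 1) = 2 * Gamma x := by
          simpa using hshift (show 1 < x + 1 by linarith)
      _ ≤ 2 * Gamma (s - 1) := by
          gcongr
          exact hmin (show 0 < s - 1 by simpa using hs)
      _ = 2 * Gamma s / (s - 1) := (hshift hs).symm
  · refine StrictAntiOn.congr (fun a ha b hb hab => ?_) (hshift.symm.mono Ioc_subset_Ioi_self)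
    exact mul_lt_mul_of_pos_left (Gamma_strictAntiOn_Ioc ⟨sub_pos.2 ha.1, by linarith [ha.2]⟩
      ⟨sub_pos.2 hb.1, by linarith [hb.2]⟩ (sub_lt_sub_right hab 1)) two_pos
  · refine StrictMonoOn.congr (fun a ha b hb hab => ?_) <|
      hshift.symm.mono fun s (hs : 3 ≤ s) => show 1 < s by linarith
    have ha' : 2 ≤ a - 1 := by linarith [mem_Ici.mp ha]
    have hb' : 2 ≤ b - 1 := by linarith [mem_Ici.mp hb]
    exact mul_lt_mul_of_pos_left (Gamma_strictMonoOn_Ici ha' hb' (sub_lt_sub_right hab 1)) two_pos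
end
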